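/- arXiv:1010.2212 — 3 statements merged into one kernel-verified Lean document; each statement's English description precedes it below -/
import Mathlib

section
/- For a quaternionic 2×2 matrix S with entries a, b, c, d ∈ H, the determinant of the Hermitian matrix SS† satisfies det(SS†) = |a|²|d|² + |b|²|c|² − 2·Re(a·c̄·d·b̄) = |ad − bc|² − 2·Re(a·[c̄,d]·b̄), where [c̄,d] = c̄d − dc̄. -/
open Quaternion

/-- `det(SS†)` for the quaternionic 2×2 matrix `S = [[a,b],[c,d]]`:
the Hermitian matrix `SS†` has real diagonal entries `|a|²+|b|²`, `|c|²+|d|²` and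
off-diagonal entry `a c̄ + b d̄`, and its determinant is
`(top-left)(bottom-right) − |top-right|²`. -/
noncomputable def detSS (a b c d : ℍ[ℝ]) : ℝ :=
  (Quaternion.normSq a + Quaternion.normSq b) * (Quaternion.normSq c + Quaternion.normSq d)
    - Quaternion.normSq (a * star c + b * star d)

/-- For a quaternionic 2×2 matrix `S` with entries `a,b,c,d`:
`det(SS†) = |a|²|d|² + |b|²|c|² − 2·Re(a c̄ d b̄) = |ad − bc|² − 2·Re(a [c̄,d] b̄)`,
where `[c̄,d] = c̄d − dc̄`. -/
theorem detSS_formulas (a b c d : ℍ[ℝ]) :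
    detSS a b c d
      = Quaternion.normSq a * Quaternion.normSq d + Quaternion.normSq b * Quaternion.normSq c
          - 2 * (a * star c * d * star b).re
    ∧ detSS a b c d
      = Quaternion.normSq (a * d - b * c)
          - 2 * (a * (star c * d - d * star c) * star b).re := by
  constructor <;>
  · simp only [detSS, Quaternion.normSq_def', Quaternion.re_mul, Quaternion.imI_mul,
      Quaternion.imJ_mul, Quaternion.imK_mul, Quaternion.re_sub, Quaternion.imI_sub,
      Quaternion.imJ_sub, Quaternion.imK_sub, Quaternion.re_add, Quaternion.imI_add,
      Quaternion.imJ_add, Quaternion.imK_add, Quaternion.re_star, Quaternion.imI_star,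
      Quaternion.imJ_star, Quaternion.imK_star]
    ring
end

section
/- For a quaternionic 2×2 matrix S, the conjugation map X ↦ SXS† on Hermitian 2×2 quaternionic matrices X preserves the Lorentzian norm ‖X‖² = −det X = −x⁺x⁻ + x̄x (where X = [[x⁺,x],[x̄,x⁻]], x⁺,x⁻ ∈ R, x ∈ H) if and only if det(SS†) = 1. -/
open Quaternion Matrix

/-- The Lorentzian norm `‖X‖² = −x⁺x⁻ + |x|²` of a Hermitian 2×2 quaternionic matrix
`X = [[x⁺,x],[x̄,x⁻]]`. -/
noncomputable def lorNorm (M : Matrix (Fin 2) (Fin 2) ℍ[ℝ]) : ℝ :=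
  Quaternion.normSq (M 0 1) - (M 0 0).re * (M 1 1).re

set_option maxHeartbeats 4000000 in
set_option maxRecDepth 100000 in
/-- The fundamental identity: `lorNorm (S X S†) = detSS S · lorNorm X`, written out
entrywise. Proved by brute-force expansion into real components. -/
lemma lorNorm_conj_key (a b c d x : ℍ[ℝ]) (xp xm : ℝ) :
    Quaternion.normSq ((a * (xp : ℍ[ℝ]) + b * star x) * star c + (a * x + b * (xm : ℍ[ℝ])) * star d)
      - ((a * (xp : ℍ[ℝ]) + b * star x) * star a + (a * x + b * (xm : ℍ[ℝ])) * star b).re *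
        ((c * (xp : ℍ[ℝ]) + d * star x) * star c + (c * x + d * (xm : ℍ[ℝ])) * star d).re
    = detSS a b c d * (Quaternion.normSq x - xp * xm) := by
  simp only [detSS, Quaternion.normSq_def', Quaternion.re_mul,
    Quaternion.imI_mul, Quaternion.imJ_mul, Quaternion.imK_mul,
    Quaternion.re_add, Quaternion.imI_add, Quaternion.imJ_add,
    Quaternion.imK_add, Quaternion.re_star, Quaternion.imI_star,
    Quaternion.imJ_star, Quaternion.imK_star, Quaternion.re_coe,
    Quaternion.imI_coe, Quaternion.imJ_coe, Quaternion.imK_coe]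
  obtain ⟨a1, a2, a3, a4⟩ := a
  obtain ⟨b1, b2, b3, b4⟩ := b
  obtain ⟨c1, c2, c3, c4⟩ := c
  obtain ⟨d1, d2, d3, d4⟩ := d
  obtain ⟨x1, x2, x3, x4⟩ := x
  ring

/-- Matrix form of the key identity. -/
lemma lorNorm_conj (a b c d : ℍ[ℝ]) (xp xm : ℝ) (x : ℍ[ℝ]) :
    lorNorm (!![a, b; c, d] * !![(xp : ℍ[ℝ]), x; star x, (xm : ℍ[ℝ])] * (!![a, b; c, d])ᴴ)
      = detSS a b c d * lorNorm !![(xp : ℍ[ℝ]), x; star x, (xm : ℍ[ℝ])] := by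
  have h := lorNorm_conj_key a b c d x xp xm
  simp only [lorNorm, Matrix.mul_apply, Fin.sum_univ_two, conjTranspose_apply,
    Matrix.cons_val', Matrix.cons_val_zero, Matrix.cons_val_one, Matrix.head_cons,
    Matrix.empty_val', Matrix.cons_val_fin_one, Matrix.head_fin_const, Quaternion.re_coe, Matrix.of_apply]
  convert h using 3

/-- The conjugation map `X ↦ SXS†` on Hermitian 2×2 quaternionic matrices
preserves the Lorentzian norm `‖X‖² = −x⁺x⁻ + |x|²` if and only if `det(SS†) = 1`. -/
theorem conjugation_preserves_lorNorm_iff (a b c d : ℍ[ℝ]) :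
    (∀ (xp xm : ℝ) (x : ℍ[ℝ]),
        lorNorm (!![a, b; c, d] * !![(xp : ℍ[ℝ]), x; star x, (xm : ℍ[ℝ])] * (!![a, b; c, d])ᴴ)
          = lorNorm !![(xp : ℍ[ℝ]), x; star x, (xm : ℍ[ℝ])])
      ↔ detSS a b c d = 1 := by
  constructor
  · intro h
    have h1 := h 0 0 1
    rw [lorNorm_conj] at h1
    have h2 : lorNorm !![((0:ℝ) : ℍ[ℝ]), 1; star 1, ((0:ℝ) : ℍ[ℝ])] = 1 := by
      simp [lorNorm]
    rw [h2] at h1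
    linarith
  · intro h xp xm x
    rw [lorNorm_conj, h, one_mul]
end

section
/- For the translation matrix T_y = [[1,y],[0,1]] with y in a (possibly non-associative) alternative algebra A, and Hermitian X = [[x⁺,x],[x̄,x⁻]], the products (T_y X)T_y† and T_y(X T_y†) agree and equal [[x⁺ + 2(x,y) + x⁻|y|², x + x⁻y],[x̄ + x⁻ȳ, x⁻]]. Consequently T_x T_y = T_{x+y}, and the conjugation action of translations preserves the Lorentzian norm ‖X‖² = −x⁺x⁻ + |x|². -/
/- The octonions, constructed as the Cayley–Dickson double of the quaternions,
with multiplication `(a+ib)(c+id) = (ac - d·b̄) + i(cb + ā·d)`. -/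
noncomputable section
open Quaternion

structure Oct where
  q1 : ℍ[ℝ]
  q2 : ℍ[ℝ]

namespace Oct

instance : Zero Oct := ⟨⟨0, 0⟩⟩
instance : One Oct := ⟨⟨1, 0⟩⟩
instance : Add Oct := ⟨fun p q => ⟨p.q1 + q.q1, p.q2 + q.q2⟩⟩
instance : Neg Oct := ⟨fun p => ⟨-p.q1, -p.q2⟩⟩
instance : Sub Oct := ⟨fun p q => ⟨p.q1 - q.q1, p.q2 - q.q2⟩⟩
instance : SMul ℝ Oct := ⟨fun r p => ⟨r • p.q1, r • p.q2⟩⟩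
instance : Mul Oct :=
  ⟨fun p q => ⟨p.q1 * q.q1 - q.q2 * star p.q2, q.q1 * p.q2 + star p.q1 * q.q2⟩⟩

/-- Octonionic conjugation. -/
def conj (p : Oct) : Oct := ⟨star p.q1, -p.q2⟩

/-- The squared norm of an octonion. -/
def normSq (p : Oct) : ℝ := Quaternion.normSq p.q1 + Quaternion.normSq p.q2

/-- The multiplicative inverse `a⁻¹ = ā / |a|²` of an octonion. -/
def inv (p : Oct) : Oct := (normSq p)⁻¹ • conj p

end Oct

/-- The real inner product `(x,y) = ½(x·ȳ + y·x̄)` on the octonions. -/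
noncomputable def oinner (p q : Oct) : ℝ := (p.q1 * star q.q1).re + (p.q2 * star q.q2).re

/-- The squared norm `|y|² = (y,y)` on the octonions. -/
noncomputable def onormSq (p : Oct) : ℝ := oinner p p

@[simp] lemma oct_mul_q1 (p q : Oct) : (p*q).q1 = p.q1*q.q1 - q.q2 * star p.q2 := rfl
@[simp] lemma oct_mul_q2 (p q : Oct) : (p*q).q2 = q.q1*p.q2 + star p.q1 * q.q2 := rfl
@[simp] lemma oct_add_q1 (p q : Oct) : (p+q).q1 = p.q1+q.q1 := rfl
@[simp] lemma oct_add_q2 (p q : Oct) : (p+q).q2 = p.q2+q.q2 := rfl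
@[simp] lemma oct_smul_q1 (r : ℝ) (p : Oct) : (r • p).q1 = r • p.q1 := rfl
@[simp] lemma oct_smul_q2 (r : ℝ) (p : Oct) : (r • p).q2 = r • p.q2 := rfl
@[simp] lemma oct_one_q1 : (1 : Oct).q1 = 1 := rfl
@[simp] lemma oct_one_q2 : (1 : Oct).q2 = 0 := rfl
@[simp] lemma oct_conj_q1 (p : Oct) : (Oct.conj p).q1 = star p.q1 := rfl
@[simp] lemma oct_conj_q2 (p : Oct) : (Oct.conj p).q2 = -p.q2 := rfl

lemma oct_ext (p q : Oct) (h1 : p.q1 = q.q1) (h2 : p.q2 = q.q2) : p = q := by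
  cases p; cases q; simp_all

set_option maxHeartbeats 1600000 in
/-- For the translation matrix `T_y = [[1,y],[0,1]]` over the octonions and
Hermitian `X = [[x⁺,x],[x̄,x⁻]]`, both bracketings `(T_y X)T_y†` and `T_y(X T_y†)` agree
and equal `[[x⁺ + 2(x,y) + x⁻|y|², x + x⁻y],[x̄ + x⁻ȳ, x⁻]]`; consequently
`T_x T_y = T_{x+y}`, and the conjugation action of translations preserves the Lorentzian
norm `‖X‖² = −x⁺x⁻ + |x|²`. -/
theorem octonionic_translation_action (xp xm : ℝ) (x y : Oct) :
    -- top-left entry of (T_y X) T_y†: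
    ((xp • (1 : Oct) + y * Oct.conj x) + (x + xm • y) * Oct.conj y
        = xp • (1 : Oct) + (2 * oinner x y + xm * onormSq y) • (1 : Oct))
    -- top-left entry of T_y (X T_y†):
    ∧ ((xp • (1 : Oct) + x * Oct.conj y) + y * (Oct.conj x + xm • Oct.conj y)
        = xp • (1 : Oct) + (2 * oinner x y + xm * onormSq y) • (1 : Oct))
    -- top-right entries of both bracketings agree and equal x + x⁻·y:
    ∧ ((x + xm • y = x + y * (xm • (1 : Oct))))
    -- T_x T_y = T_{x+y} (the only nontrivial matrix entry):
    ∧ ((1 : Oct) * y + x * (1 : Oct) = x + y)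
    -- the Lorentzian norm is preserved:
    ∧ (-(xp + (2 * oinner x y + xm * onormSq y)) * xm + onormSq (x + xm • y)
        = -(xp * xm) + onormSq x) := by
  refine ⟨?_, ?_, ?_, ?_, ?_⟩
  · apply oct_ext <;> ext <;>
      simp [oinner, onormSq, Quaternion.normSq_def', smul_eq_mul] <;> ring
  · apply oct_ext <;> ext <;>
      simp [oinner, onormSq, Quaternion.normSq_def', smul_eq_mul] <;> ring
  · apply oct_ext <;> ext <;> simp [smul_eq_mul]
  · apply oct_ext <;> ext <;> simp [add_comm]
  · simp [oinner, onormSq, smul_eq_mul]; ring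
end
end
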